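/- arXiv:2404.09649 — 5 statements merged into one kernel-verified Lean document; each statement's English description precedes it below -/
import Mathlib

section
/- Let G be a finite graph, v a vertex of degree 3 with incident edges e_1, e_2, e_3 (none of which is a loop, and e_1, e_2, e_3 pairwise distinct), and C a finite set of cycles of G. Extend C* to the map (½ℤ)^{E(G)} → (½ℤ)^C. Then C*( ½(e_1 + e_2 − e_3) ) = Σ_{c ∈ C : e_1 ∈ c and e_2 ∈ c} c; in particular this element lies in ℤ^C. -/
/-!
A cycle through `v = vtx j` meets `v` exactly along its two consecutive edges `edg (j - 1)` and
`edg j`, which are distinct because a cycle of length one would consist of a loop. Hence a cycle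
contains either none or exactly two of `e₁, e₂, e₃`, and in each of the four cases the coefficient
`½(𝟙[e₁ ∈ c] + 𝟙[e₂ ∈ c] − 𝟙[e₃ ∈ c])` is `𝟙[e₁, e₂ ∈ c]`.
-/

/-- A cycle of length `k` in the graph with vertex set `V`, edge set `E` and
source/target maps `s t : E → V`: `k` distinct vertices and `k` distinct edges
with `{s(eᵢ), t(eᵢ)} = {vᵢ, vᵢ₊₁}` (indices mod `k`). -/
structure GCycle {V E : Type*} (s t : E → V) (k : ℕ) where
  pos : 0 < k
  vtx : ZMod k → V
  edg : ZMod k → E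
  vtx_inj : Function.Injective vtx
  edg_inj : Function.Injective edg
  ends : ∀ i, ({s (edg i), t (edg i)} : Set V) = {vtx i, vtx (i + 1)}

/-- A cycle of the graph (of some length). -/
abbrev GraphCycle {V E : Type*} (s t : E → V) : Type _ := (k : ℕ) × GCycle s t k

/-- The edge `e` belongs to the cycle `c`. -/
def GraphCycle.memE {V E : Type*} {s t : E → V} (c : GraphCycle s t) (e : E) : Prop :=
  ∃ i, c.2.edg i = e

open Classical in
/-- The map `C* : ℤ^{E(G)} → ℤ^C`, sending each edge `e` to the sum of the
cycles in `C` containing `e`, extended `ℤ`-linearly. -/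
noncomputable def cycleMap {V E : Type*} [Fintype E] (s t : E → V)
    (C : Set (GraphCycle s t)) (x : E → ℤ) : C → ℤ :=
  fun c => ∑ e : E, if (c : GraphCycle s t).memE e then x e else 0

open Classical in
/-- The extension of the map `C*` to half-integer (here: rational) coefficients. -/
noncomputable def cycleMapQ {V E : Type*} [Fintype E] (s t : E → V)
    (C : Set (GraphCycle s t)) (x : E → ℚ) : C → ℚ :=
  fun c => ∑ e : E, if (c : GraphCycle s t).memE e then x e else 0

namespace GCycle

variable {V E : Type*} {s t : E → V} {k : ℕ}

theorem one_lt_of_ends_ne (c : GCycle s t k) {i : ZMod k} (h : s (c.edg i) ≠ t (c.edg i)) :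
    1 < k := by
  obtain rfl | hk := (Nat.one_le_iff_ne_zero.mpr c.pos.ne').eq_or_lt
  · have hends := c.ends i
    rw [Subsingleton.elim (i + 1) i, Set.pair_eq_singleton] at hends
    have hs : s (c.edg i) ∈ ({c.vtx i} : Set V) := hends ▸ Set.mem_insert _ _
    have ht : t (c.edg i) ∈ ({c.vtx i} : Set V) := hends ▸ by simp
    exact absurd (hs.trans ht.symm) h
  · exact hk

theorem edg_incident_iff (c : GCycle s t k) {v : V} {j : ZMod k} (hj : c.vtx j = v) (i : ZMod k) :
    (s (c.edg i) = v ∨ t (c.edg i) = v) ↔ (i = j - 1 ∨ i = j) := by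
  subst hj
  have hmem : c.vtx j ∈ ({s (c.edg i), t (c.edg i)} : Set V) ↔
      c.vtx j ∈ ({c.vtx i, c.vtx (i + 1)} : Set V) := by rw [c.ends i]
  simp only [Set.mem_insert_iff, Set.mem_singleton_iff, c.vtx_inj.eq_iff] at hmem
  rw [eq_sub_iff_add_eq]
  grind

end GCycle

namespace GraphCycle

variable {V E : Type*} {s t : E → V}

theorem exists_pair_of_incident (c : GraphCycle s t) {v : V} {e : E} (he : c.memE e)
    (hev : s e = v ∨ t e = v) (hne : s e ≠ t e) :
    ∃ f g, f ≠ g ∧ ∀ e, (c.memE e ∧ (s e = v ∨ t e = v)) ↔ (e = f ∨ e = g) := by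
  obtain ⟨k, c⟩ := c
  obtain ⟨i, rfl⟩ := he
  -- `1 ≠ 0` in `ZMod k`, which separates `edg (j - 1)` from `edg j`, needs `1 < k`
  have : Fact (1 < k) := ⟨c.one_lt_of_ends_ne hne⟩
  obtain ⟨j, hj⟩ : ∃ j, c.vtx j = v := by
    have hv := congrArg (v ∈ ·) (c.ends i)
    simp only [Set.mem_insert_iff, Set.mem_singleton_iff] at hv
    rcases hv.mp (by rcases hev with h | h <;> simp [h]) with h | h
    exacts [⟨i, h.symm⟩, ⟨i + 1, h.symm⟩]
  refine ⟨c.edg (j - 1), c.edg j, fun h => one_ne_zero (sub_eq_self.mp (c.edg_inj h)), ?_⟩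
  intro e
  constructor
  · rintro ⟨⟨i', rfl⟩, hi'⟩
    rcases (c.edg_incident_iff hj i').mp hi' with rfl | rfl <;> simp
  · rintro (rfl | rfl)
    exacts [⟨⟨_, rfl⟩, (c.edg_incident_iff hj _).mpr (.inl rfl)⟩,
      ⟨⟨_, rfl⟩, (c.edg_incident_iff hj _).mpr (.inr rfl)⟩]

open Classical in
theorem half_indicator_at_degree_three (c : GraphCycle s t) {v : V} {e₁ e₂ e₃ : E}
    (h12 : e₁ ≠ e₂) (h13 : e₁ ≠ e₃) (h23 : e₂ ≠ e₃)
    (hl1 : s e₁ ≠ t e₁) (hl2 : s e₂ ≠ t e₂) (hl3 : s e₃ ≠ t e₃)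
    (hinc : ∀ e : E, (s e = v ∨ t e = v) ↔ (e = e₁ ∨ e = e₂ ∨ e = e₃)) :
    (1 / 2 : ℚ) * ((if c.memE e₁ then 1 else 0) + (if c.memE e₂ then 1 else 0)
      - (if c.memE e₃ then 1 else 0)) = if c.memE e₁ ∧ c.memE e₂ then 1 else 0 := by
  by_cases hmeet : ∃ e, c.memE e ∧ (s e = v ∨ t e = v)
  · obtain ⟨e, he, hev⟩ := hmeet
    have hne : s e ≠ t e := by rcases (hinc e).mp hev with rfl | rfl | rfl <;> assumption
    obtain ⟨f, g, hfg, hpair⟩ := c.exists_pair_of_incident he hev hne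
    have hmem : ∀ x, (s x = v ∨ t x = v) → (c.memE x ↔ x = f ∨ x = g) := fun x hx =>
      (and_iff_left hx).symm.trans (hpair x)
    simp only [hmem e₁ ((hinc _).mpr (by simp)), hmem e₂ ((hinc _).mpr (by simp)),
      hmem e₃ ((hinc _).mpr (by simp))]
    have hf := (hinc f).mp ((hpair f).mpr (.inl rfl)).2
    have hg := (hinc g).mp ((hpair g).mpr (.inr rfl)).2
    rcases hf with rfl | rfl | rfl <;> rcases hg with rfl | rfl | rfl <;>
      first
        | exact absurd rfl hfg
        | norm_num [h12, h13, h23, h12.symm, h13.symm, h23.symm]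
  · have hout : ∀ x, (s x = v ∨ t x = v) → ¬ c.memE x := fun x hx hc => hmeet ⟨x, hc, hx⟩
    simp [hout e₁ ((hinc _).mpr (by simp)), hout e₂ ((hinc _).mpr (by simp)),
      hout e₃ ((hinc _).mpr (by simp))]

end GraphCycle

open Classical in
theorem cycleMapQ_apply_eq_sum_mul {V E : Type*} [Fintype E] {s t : E → V}
    (C : Set (GraphCycle s t)) (x : E → ℚ) (c : C) :
    cycleMapQ s t C x c = ∑ e, x e * if (c : GraphCycle s t).memE e then 1 else 0 := by
  simp only [cycleMapQ, mul_boole]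

open Classical in
theorem cycleMapQ_half_sum_at_degree_three_vertex_general {V E : Type*} [Fintype E]
    (s t : E → V) (v : V) (e₁ e₂ e₃ : E)
    (h12 : e₁ ≠ e₂) (h13 : e₁ ≠ e₃) (h23 : e₂ ≠ e₃)
    (hl1 : s e₁ ≠ t e₁) (hl2 : s e₂ ≠ t e₂) (hl3 : s e₃ ≠ t e₃)
    (hinc : ∀ e : E, (s e = v ∨ t e = v) ↔ (e = e₁ ∨ e = e₂ ∨ e = e₃))
    (C : Set (GraphCycle s t)) :
    cycleMapQ s t C (fun e => (1/2 : ℚ) * ((if e = e₁ then 1 else 0) +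
        (if e = e₂ then 1 else 0) - (if e = e₃ then 1 else 0)))
      = fun c : C => if (c : GraphCycle s t).memE e₁ ∧ (c : GraphCycle s t).memE e₂
          then ((1 : ℤ) : ℚ) else ((0 : ℤ) : ℚ) := by
  funext c
  rw [Int.cast_one, Int.cast_zero,
    ← (c : GraphCycle s t).half_indicator_at_degree_three h12 h13 h23 hl1 hl2 hl3 hinc]
  simp only [cycleMapQ_apply_eq_sum_mul, mul_assoc, ← Finset.mul_sum, add_mul, sub_mul, boole_mul,
    Finset.sum_add_distrib, Finset.sum_sub_distrib, Finset.sum_ite_eq', Finset.mem_univ, if_true]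

open Classical in
/-- Let `v` be a vertex of degree 3 whose incident edges are exactly the pairwise
distinct non-loop edges `e₁, e₂, e₃`, and let `C` be a finite set of cycles.  Then
`C*(½(e₁ + e₂ − e₃)) = Σ_{c ∈ C : e₁ ∈ c, e₂ ∈ c} c`; in particular this element
has integer coordinates. -/
theorem cycleMapQ_half_sum_at_degree_three_vertex {V E : Type*} [Fintype V] [Fintype E]
    (s t : E → V) (v : V) (e₁ e₂ e₃ : E)
    (h12 : e₁ ≠ e₂) (h13 : e₁ ≠ e₃) (h23 : e₂ ≠ e₃)
    (hl1 : s e₁ ≠ t e₁) (hl2 : s e₂ ≠ t e₂) (hl3 : s e₃ ≠ t e₃)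
    (hinc : ∀ e : E, (s e = v ∨ t e = v) ↔ (e = e₁ ∨ e = e₂ ∨ e = e₃))
    (C : Set (GraphCycle s t)) (hC : C.Finite) :
    cycleMapQ s t C (fun e => (1/2 : ℚ) * ((if e = e₁ then 1 else 0) +
        (if e = e₂ then 1 else 0) - (if e = e₃ then 1 else 0)))
      = fun c : C => if (c : GraphCycle s t).memE e₁ ∧ (c : GraphCycle s t).memE e₂
          then ((1 : ℤ) : ℚ) else ((0 : ℤ) : ℚ) :=
  cycleMapQ_half_sum_at_degree_three_vertex_general s t v e₁ e₂ e₃ h12 h13 h23 hl1 hl2 hl3 hinc C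
end

section
/- Let n ≥ 3. In the Möbius ladder M_n, consider the set C = C_4 ∪ C_+ ∪ {γ} of cycles, where C_4 consists of the n four-cycles {e_l, r_l, e_{l+n}, r_{l+1}} for l ∈ ℤ/n, C_+ consists of the 2n cycles {r_k, e_k, e_{k+1}, …, e_{k+n−1}} for k ∈ ℤ/2n, and γ = {e_0, …, e_{2n−1}}. Let d ∈ ℤ and let w ∈ ℤ^C be the vector with coordinate −d at the 4-cycle containing e_0 and e_n, coordinate d at γ, and 0 at all other cycles. If w lies in the image of C* : ℤ^{E(M_n)} → ℤ^C, then d = 0. -/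
/-- Edges of the Möbius ladder `M n`: `Sum.inl k` is the rim edge `e_k` from `k` to
`k+1` (for `k ∈ ℤ/2n`), and `Sum.inr l` is the rung `r_l` joining the two vertices
with residue `l` mod `n` (for `l ∈ ℤ/n`). -/
abbrev MobiusEdge (n : ℕ) : Type := ZMod (2 * n) ⊕ ZMod n

/-- Source map of the Möbius ladder `M n` (vertex set `ℤ/2n`). -/
def mobiusSrc (n : ℕ) : MobiusEdge n → ZMod (2 * n)
  | Sum.inl k => k
  | Sum.inr l => (l.val : ZMod (2 * n))

/-- Target map of the Möbius ladder `M n`. -/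
def mobiusTgt (n : ℕ) : MobiusEdge n → ZMod (2 * n)
  | Sum.inl k => k + 1
  | Sum.inr l => (l.val : ZMod (2 * n)) + (n : ZMod (2 * n))

/-- Membership in the 4-cycle `{e_l, e_{l+n}, r_l, r_{l+1}}` of `M n`, for `l ∈ ℤ/n`. -/
def memC4 (n : ℕ) (l : ZMod n) : MobiusEdge n → Prop
  | Sum.inl k => k = (l.val : ZMod (2 * n)) ∨ k = (l.val : ZMod (2 * n)) + (n : ZMod (2 * n))
  | Sum.inr m => m = l ∨ m = l + 1

/-- Membership in the `(n+1)`-cycle `{r_k, e_k, e_{k+1}, …, e_{k+n−1}}` of `M n`,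
for `k ∈ ℤ/2n` (the rung is `r_{k mod n}`). -/
def memCplus (n : ℕ) (k : ZMod (2 * n)) : MobiusEdge n → Prop
  | Sum.inl m => ∃ j : Fin n, m = k + ((j : ℕ) : ZMod (2 * n))
  | Sum.inr l => l = (k.val : ZMod n)

/-- Membership in the `2n`-cycle `γ = {e_0, …, e_{2n−1}}` consisting of all rim edges. -/
def memGamma (n : ℕ) : MobiusEdge n → Prop
  | Sum.inl _ => True
  | Sum.inr _ => False

/-- Index set for the collection `C = C₄ ∪ C₊ ∪ {γ}` of cycles of `M n`. -/
abbrev MobiusCyc (n : ℕ) : Type := ZMod n ⊕ ZMod (2 * n) ⊕ Unit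

/-- Membership of an edge in a cycle of the collection `C = C₄ ∪ C₊ ∪ {γ}`. -/
def memMobiusCyc (n : ℕ) : MobiusCyc n → MobiusEdge n → Prop
  | Sum.inl l => memC4 n l
  | Sum.inr (Sum.inl k) => memCplus n k
  | Sum.inr (Sum.inr _) => memGamma n

open Classical in
/-- The map `C* : ℤ^{E(M n)} → ℤ^C` sending each edge to the sum of the cycles in
`C = C₄ ∪ C₊ ∪ {γ}` containing it. -/
noncomputable def mobiusCycleMap (n : ℕ) [NeZero n] [NeZero (2 * n)]
    (x : MobiusEdge n → ℤ) : MobiusCyc n → ℤ :=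
  fun i => ∑ e : MobiusEdge n, if memMobiusCyc n i e then x e else 0

section Aux

variable {n : ℕ}

lemma aux_cast_inj {a b : ℕ} (ha : a < 2 * n) (hb : b < 2 * n)
    (h : (a : ZMod (2 * n)) = b) : a = b := by
  have := congrArg ZMod.val h
  rwa [ZMod.val_cast_of_lt ha, ZMod.val_cast_of_lt hb] at this

lemma aux_sum_split [NeZero n] [NeZero (2 * n)] (f : ZMod (2 * n) → ℤ) :
    ∑ k, f k
      = ∑ l : ZMod n, (f ((l.val : ℕ) : ZMod (2 * n))
          + f (((l.val : ℕ) : ZMod (2 * n)) + (n : ZMod (2 * n)))) := by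
  have hn0 : 0 < n := Nat.pos_of_ne_zero (NeZero.ne n)
  set g : ZMod n ⊕ ZMod n → ZMod (2 * n) :=
    Sum.elim (fun l => ((l.val : ℕ) : ZMod (2 * n)))
      (fun l => ((l.val : ℕ) : ZMod (2 * n)) + (n : ZMod (2 * n))) with hg
  have hkey : ∀ l : ZMod n, g (Sum.inr l) = (((l.val + n : ℕ)) : ZMod (2 * n)) := by
    intro l; simp only [hg, Sum.elim_inr]; push_cast; ring
  have hkey' : ∀ l : ZMod n, g (Sum.inl l) = ((l.val : ℕ) : ZMod (2 * n)) := by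
    intro l; simp only [hg, Sum.elim_inl]
  have hinj : Function.Injective g := by
    rintro (a | a) (b | b) hab
    · rw [hkey' a, hkey' b] at hab
      have := aux_cast_inj (by have := a.val_lt; omega) (by have := b.val_lt; omega) hab
      exact congrArg Sum.inl (ZMod.val_injective n this)
    · rw [hkey' a, hkey b] at hab
      have := aux_cast_inj (a := a.val) (by have := a.val_lt; omega)
        (by have := b.val_lt; omega) hab
      have := a.val_lt; omega
    · rw [hkey a, hkey' b] at hab
      have := aux_cast_inj (a := a.val + n) (by have := a.val_lt; omega)
        (by have := b.val_lt; omega) hab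
      have := b.val_lt; omega
    · rw [hkey a, hkey b] at hab
      have := aux_cast_inj (a := a.val + n) (by have := a.val_lt; omega)
        (by have := b.val_lt; omega) hab
      exact congrArg Sum.inr (ZMod.val_injective n (by omega))
  have hbij : Function.Bijective g := by
    rw [Fintype.bijective_iff_injective_and_card]
    refine ⟨hinj, ?_⟩
    simp [ZMod.card]; ring
  calc ∑ k, f k = ∑ s, f (g s) := (Fintype.sum_bijective g hbij _ _ (fun s => rfl)).symm
    _ = _ := by rw [Fintype.sum_sum_type, ← Finset.sum_add_distrib]; rfl

lemma aux_sum_shift {m : ℕ} [NeZero m] (f : ZMod m → ℤ) (c : ZMod m) :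
    ∑ k, f (k + c) = ∑ k, f k :=
  Fintype.sum_equiv (Equiv.addRight c) _ _ (fun k => rfl)

lemma aux_sum_ite_or {α : Type*} [Fintype α] [DecidableEq α]
    (p : α → Prop) [DecidablePred p] (a b : α) (hab : a ≠ b)
    (hp : ∀ k, p k ↔ (k = a ∨ k = b)) (f : α → ℤ) :
    (∑ k, if p k then f k else 0) = f a + f b := by
  have hpt : ∀ k, (if p k then f k else 0)
      = (if k = a then f k else 0) + (if k = b then f k else 0) := by
    intro k
    by_cases h1 : k = a <;> by_cases h2 : k = b <;>
      simp [hp, h1, h2] <;> simp_all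
  rw [Finset.sum_congr rfl (fun k _ => hpt k), Finset.sum_add_distrib]
  simp

lemma aux_sum_ite_exists [NeZero (2 * n)] (p : ZMod (2 * n) → Prop) [DecidablePred p]
    (k : ZMod (2 * n))
    (hp : ∀ m, p m ↔ ∃ j : Fin n, m = k + ((j : ℕ) : ZMod (2 * n)))
    (f : ZMod (2 * n) → ℤ) :
    (∑ m, if p m then f m else 0)
      = ∑ j : Fin n, f (k + ((j : ℕ) : ZMod (2 * n))) := by
  set g : Fin n → ZMod (2 * n) := fun j => k + ((j : ℕ) : ZMod (2 * n)) with hg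
  have hginj : Function.Injective g := by
    intro a b hab
    simp only [hg, add_right_inj] at hab
    exact Fin.ext (aux_cast_inj (by have := a.isLt; omega) (by have := b.isLt; omega) hab)
  have hpt : ∀ m, (if p m then f m else 0)
      = (if m ∈ Finset.image g Finset.univ then f m else 0) := by
    intro m
    refine if_congr ?_ rfl rfl
    rw [hp]
    simp only [Finset.mem_image, Finset.mem_univ, true_and, hg]
    exact ⟨fun ⟨j, hj⟩ => ⟨j, hj.symm⟩, fun ⟨j, hj⟩ => ⟨j, hj.symm⟩⟩
  rw [Finset.sum_congr rfl (fun m _ => hpt m), Finset.sum_ite_mem, Finset.univ_inter,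
    Finset.sum_image (fun a _ b _ h => hginj h)]

end Aux


/-- For `n ≥ 3` and `d ∈ ℤ`, if the vector `w ∈ ℤ^C` with coordinate `−d` at the
4-cycle containing `e_0` and `e_n` (namely the 4-cycle indexed by `l = 0`),
coordinate `d` at `γ`, and `0` elsewhere lies in the image of `C*`, then `d = 0`. -/
theorem mobius_writhe_vector_in_image_iff (n : ℕ) [NeZero n] [NeZero (2 * n)]
    (hn : 3 ≤ n) (d : ℤ)
    (h : (fun i => match i with
          | Sum.inl l => if l = 0 then -d else 0
          | Sum.inr (Sum.inl _) => 0
          | Sum.inr (Sum.inr _) => d) ∈ Set.range (mobiusCycleMap n)) :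
    d = 0 := by
  classical
  obtain ⟨x, hx⟩ := h
  have hn0 : 0 < n := by omega
  set Sa : ℤ := ∑ k : ZMod (2 * n), x (Sum.inl k) with hSa
  set Sr : ℤ := ∑ l : ZMod n, x (Sum.inr l) with hSr
  have hxi : ∀ i, mobiusCycleMap n x i = (fun i => match i with
          | Sum.inl l => if l = 0 then -d else 0
          | Sum.inr (Sum.inl _) => (0:ℤ)
          | Sum.inr (Sum.inr _) => d) i := fun i => congrFun hx i
  -- γ equation : Sa = d
  have hC : Sa = d := by
    have := hxi (Sum.inr (Sum.inr ()))
    simpa [mobiusCycleMap, memMobiusCyc, memGamma, Fintype.sum_sum_type, hSa] using this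
  -- cast facts
  have hncast_ne : (n : ZMod (2 * n)) ≠ 0 := by
    intro hcon
    have : ((n : ℕ) : ZMod (2 * n)) = ((0 : ℕ) : ZMod (2 * n)) := by simpa using hcon
    have := aux_cast_inj (by omega) (by omega) this
    omega
  have hone_ne : (1 : ZMod n) ≠ 0 := by
    intro hcon
    have h2 : ((1 : ℕ) : ZMod n) = ((0 : ℕ) : ZMod n) := by simpa using hcon
    have h3 := congrArg ZMod.val h2
    rw [ZMod.val_cast_of_lt (by omega), ZMod.val_cast_of_lt (by omega)] at h3
    omega
  -- C4 equations summed : Sa + 2 Sr = -d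
  have hA : Sa + (Sr + Sr) = -d := by
    have hsum : ∑ l : ZMod n, mobiusCycleMap n x (Sum.inl l)
        = ∑ l : ZMod n, (if l = 0 then -d else (0:ℤ)) :=
      Finset.sum_congr rfl (fun l _ => hxi (Sum.inl l))
    have hrhs : ∑ l : ZMod n, (if l = 0 then -d else (0:ℤ)) = -d := by simp
    have hlhs : ∑ l : ZMod n, mobiusCycleMap n x (Sum.inl l) = Sa + (Sr + Sr) := by
      have hterm : ∀ l : ZMod n, mobiusCycleMap n x (Sum.inl l)
          = (x (Sum.inl ((l.val : ℕ) : ZMod (2 * n)))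
              + x (Sum.inl (((l.val : ℕ) : ZMod (2 * n)) + (n : ZMod (2 * n)))))
            + (x (Sum.inr l) + x (Sum.inr (l + 1))) := by
        intro l
        rw [mobiusCycleMap, Fintype.sum_sum_type]
        have h1 : (∑ k : ZMod (2 * n),
            if memMobiusCyc n (Sum.inl l) (Sum.inl k) then x (Sum.inl k) else 0)
            = x (Sum.inl ((l.val : ℕ) : ZMod (2 * n)))
              + x (Sum.inl (((l.val : ℕ) : ZMod (2 * n)) + (n : ZMod (2 * n)))) := by
          have hne : ((l.val : ℕ) : ZMod (2 * n))
              ≠ ((l.val : ℕ) : ZMod (2 * n)) + (n : ZMod (2 * n)) := by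
            intro hcon
            exact hncast_ne (by linear_combination hcon.symm)
          exact aux_sum_ite_or (fun k => memMobiusCyc n (Sum.inl l) (Sum.inl k)) _ _ hne
            (fun k => Iff.rfl) (fun k => x (Sum.inl k))
        have h2 : (∑ m : ZMod n,
            if memMobiusCyc n (Sum.inl l) (Sum.inr m) then x (Sum.inr m) else 0)
            = x (Sum.inr l) + x (Sum.inr (l + 1)) := by
          have hne : l ≠ l + 1 := by
            intro hcon
            exact hone_ne (by linear_combination -hcon)
          exact aux_sum_ite_or (fun m => memMobiusCyc n (Sum.inl l) (Sum.inr m)) _ _ hne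
            (fun m => Iff.rfl) (fun m => x (Sum.inr m))
        rw [h1, h2]
      rw [Finset.sum_congr rfl (fun l _ => hterm l), Finset.sum_add_distrib]
      congr 1
      · rw [hSa, aux_sum_split (fun k => x (Sum.inl k))]
      · rw [Finset.sum_add_distrib, aux_sum_shift (fun m => x (Sum.inr m)) 1, hSr]
    rw [hsum, hrhs] at hlhs
    omega
  -- C+ equations summed : n * Sa + 2 Sr = 0
  have hB : (n : ℤ) * Sa + (Sr + Sr) = 0 := by
    have hsum : ∑ k : ZMod (2 * n), mobiusCycleMap n x (Sum.inr (Sum.inl k)) = 0 := by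
      rw [Finset.sum_congr rfl (fun k _ => hxi (Sum.inr (Sum.inl k)))]
      simp
    have hterm : ∀ k : ZMod (2 * n), mobiusCycleMap n x (Sum.inr (Sum.inl k))
        = (∑ j : Fin n, x (Sum.inl (k + ((j : ℕ) : ZMod (2 * n)))))
          + x (Sum.inr ((k.val : ℕ) : ZMod n)) := by
      intro k
      rw [mobiusCycleMap, Fintype.sum_sum_type]
      congr 1
      · exact aux_sum_ite_exists (fun m => memMobiusCyc n (Sum.inr (Sum.inl k)) (Sum.inl m)) k
          (fun m => Iff.rfl) (fun m => x (Sum.inl m))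
      · simp [memMobiusCyc, memCplus]
    rw [Finset.sum_congr rfl (fun k _ => hterm k), Finset.sum_add_distrib] at hsum
    have hpart1 : ∑ k : ZMod (2 * n), ∑ j : Fin n,
        x (Sum.inl (k + ((j : ℕ) : ZMod (2 * n)))) = (n : ℤ) * Sa := by
      rw [Finset.sum_comm]
      have hs : ∀ j : Fin n, ∑ k : ZMod (2 * n),
          x (Sum.inl (k + ((j : ℕ) : ZMod (2 * n)))) = Sa := by
        intro j
        rw [hSa]
        exact aux_sum_shift (fun k => x (Sum.inl k)) _
      rw [Finset.sum_congr rfl (fun j _ => hs j)]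
      simp [mul_comm]
    have hpart2 : ∑ k : ZMod (2 * n), x (Sum.inr ((k.val : ℕ) : ZMod n)) = Sr + Sr := by
      rw [aux_sum_split (fun k => x (Sum.inr ((k.val : ℕ) : ZMod n)))]
      have hval1 : ∀ l : ZMod n, ((((l.val : ℕ) : ZMod (2 * n)).val : ℕ) : ZMod n) = l := by
        intro l
        rw [ZMod.val_cast_of_lt (by have := l.val_lt; omega)]
        simp [ZMod.natCast_val]
      have hval2 : ∀ l : ZMod n,
          (((((l.val : ℕ) : ZMod (2 * n)) + (n : ZMod (2 * n))).val : ℕ) : ZMod n) = l := by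
        intro l
        have he : (((l.val : ℕ) : ZMod (2 * n)) + (n : ZMod (2 * n)))
            = (((l.val + n : ℕ)) : ZMod (2 * n)) := by push_cast; ring
        rw [he, ZMod.val_cast_of_lt (by have := l.val_lt; omega)]
        push_cast
        simp [ZMod.natCast_val]
      simp only [hval1, hval2]
      rw [hSr, ← Finset.sum_add_distrib]
    rw [hpart1, hpart2] at hsum
    exact hsum
  -- finish
  have hfin : ((n : ℤ) - 2) * d = 0 := by
    rw [hC] at hA hB
    linarith
  rcases mul_eq_zero.mp hfin with h0 | h0
  · exfalso
    have h3 : (3 : ℤ) ≤ (n : ℤ) := by exact_mod_cast hn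
    omega
  · exact h0
end

section
/- Let G be a finite 3-regular graph and v a vertex with incident edges e, f, g (distinct, non-loops). Let C be a finite set of cycles of G and extend C* to half-integer coefficients. With u_v := ½(e + f + g), one has C*(u_v − g) = Σ_{c ∈ C : e, f ∈ c} c ∈ ℤ^C. Consequently, C* maps the submodule 𝒞_G of (½ℤ)^{E(G)} spanned by E(G) together with all elements u_v (v ∈ V(G)) into ℤ^C. -/
/-- The indicator function of an edge, as an element of `(½ℤ)^{E(G)} ⊆ ℚ^{E(G)}`. -/
noncomputable def edgeInd {E : Type*} (e : E) : E → ℚ :=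
  open Classical in fun e' => if e' = e then 1 else 0

open Classical in
/-- For a vertex `w` of a 3-regular graph, `u_w` is half the sum of the (indicators
of the) three edges at `w`, loops counted twice. -/
noncomputable def uVtx {V E : Type*} (s t : E → V) (w : V) : E → ℚ :=
  fun e => (1/2 : ℚ) * ((if s e = w then 1 else 0) + (if t e = w then 1 else 0))

/-- The submodule `𝒞_G ⊆ (½ℤ)^{E(G)}` spanned by the edge indicators together with
the elements `u_w` for all vertices `w`. -/
noncomputable def CGsub {V E : Type*} (s t : E → V) : Submodule ℤ (E → ℚ) :=
  Submodule.span ℤ (Set.range (edgeInd (E := E)) ∪ Set.range (uVtx s t))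


/-!
Along a cycle `c` the ends of its `i`-th edge are its `i`-th and `(i+1)`-th vertices, so summing
the half-incidences `u_w(x) = ½([s x = w] + [t x = w])` over the edges of `c` counts every visit
of `c` to `w` twice: `C*(u_w)(c)` is the number of visits, an integer. Hence `C*` sends the
generators of `𝒞_G`, and so all of it, into `ℤ^C`. At a vertex `v` whose edges `e, f, g` are
distinct non-loops, `u_v = ½(e + f + g)`; integrality of `C*(u_v)(c)` says that `c` contains none
or exactly two of `e, f, g`, and in either case `½([e ∈ c] + [f ∈ c] + [g ∈ c]) − [g ∈ c]` is
`[e ∈ c ∧ f ∈ c]`.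
-/

open Classical Finset

section

variable {V E : Type*} {s t : E → V}

lemma GCycle.neZero {k : ℕ} (c : GCycle s t k) : NeZero k := ⟨c.pos.ne'⟩

lemma GCycle.uVtx_edg {k : ℕ} (c : GCycle s t k) (w : V) (i : ZMod k) :
    uVtx s t w (c.edg i) =
      (1/2 : ℚ) * ((if c.vtx i = w then 1 else 0) + (if c.vtx (i + 1) = w then 1 else 0)) := by
  rcases Set.pair_eq_pair_iff.1 (c.ends i) with ⟨hs, ht⟩ | ⟨hs, ht⟩
  · rw [uVtx, hs, ht]
  · rw [uVtx, hs, ht, add_comm (ite _ _ _)]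

lemma GCycle.sum_uVtx_edg {k : ℕ} [NeZero k] (c : GCycle s t k) (w : V) :
    ∑ i, uVtx s t w (c.edg i) = #{i | c.vtx i = w} := by
  have hshift : ∑ i, (if c.vtx (i + 1) = w then (1 : ℚ) else 0) =
      ∑ i, (if c.vtx i = w then (1 : ℚ) else 0) :=
    Equiv.sum_comp (Equiv.addRight 1) fun i => if c.vtx i = w then (1 : ℚ) else 0
  simp only [c.uVtx_edg, ← Finset.mul_sum, Finset.sum_add_distrib, hshift, Finset.sum_boole]
  ring

variable {v : V}

lemma uVtx_apply_of_incident {x : E} (hx : s x ≠ t x) (hv : s x = v ∨ t x = v) :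
    uVtx s t v x = 1/2 := by
  rcases hv with rfl | rfl
  · simp [uVtx, Ne.symm hx]
  · simp [uVtx, hx]

lemma uVtx_apply_of_not_incident {x : E} (hv : ¬(s x = v ∨ t x = v)) : uVtx s t v x = 0 := by
  rw [not_or] at hv
  simp [uVtx, hv.1, hv.2]

lemma uVtx_eq_half_smul_of_incident {e f g : E} (hef : e ≠ f) (heg : e ≠ g) (hfg : f ≠ g)
    (hle : s e ≠ t e) (hlf : s f ≠ t f) (hlg : s g ≠ t g)
    (hinc : ∀ e' : E, (s e' = v ∨ t e' = v) ↔ (e' = e ∨ e' = f ∨ e' = g)) :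
    uVtx s t v = (1/2 : ℚ) • (edgeInd e + edgeInd f + edgeInd g) := by
  ext x
  by_cases hx : x = e ∨ x = f ∨ x = g
  · rw [uVtx_apply_of_incident ?loop ((hinc x).2 hx)]
    case loop => rcases hx with rfl | rfl | rfl <;> assumption
    rcases hx with rfl | rfl | rfl <;> simp [edgeInd, hef, heg, hfg, hef.symm, heg.symm, hfg.symm]
  · rw [uVtx_apply_of_not_incident ((hinc x).not.2 hx)]
    simp only [not_or] at hx
    simp [edgeInd, hx.1, hx.2.1, hx.2.2]

end

lemma half_sum_ite_sub_ite {P Q R : Prop} {m : ℕ}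
    (h : (1/2 : ℚ) * ((if P then 1 else 0) + (if Q then 1 else 0) + (if R then 1 else 0)) = m) :
    (1/2 : ℚ) * ((if P then 1 else 0) + (if Q then 1 else 0) + (if R then 1 else 0))
      - (if R then 1 else 0) = if P ∧ Q then 1 else 0 := by
  have hm : ((if P then 1 else 0) + (if Q then 1 else 0) + (if R then 1 else 0) : ℕ) = 2 * m := by
    exact_mod_cast (by linarith : ((if P then 1 else 0) + (if Q then 1 else 0)
      + (if R then 1 else 0) : ℚ) = 2 * m)
  by_cases hP : P <;> by_cases hQ : Q <;> by_cases hR : R <;> simp [hP, hQ, hR] at hm ⊢ <;>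
    first | omega | norm_num

def intPoints (ι : Type*) : Submodule ℤ (ι → ℚ) where
  carrier := {y | ∀ i, ∃ m : ℤ, y i = m}
  add_mem' {y z} hy hz i := by
    obtain ⟨m, hm⟩ := hy i
    obtain ⟨n, hn⟩ := hz i
    exact ⟨m + n, by simp [hm, hn]⟩
  zero_mem' _ := ⟨0, by simp⟩
  smul_mem' a y hy i := by
    obtain ⟨m, hm⟩ := hy i
    exact ⟨a * m, by simp [hm]⟩

section

variable {V E : Type*} [Fintype E] {s t : E → V}

lemma GraphCycle.sum_ite_memE {M : Type*} [AddCommMonoid M] (c : GraphCycle s t) [NeZero c.1]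
    (x : E → M) : ∑ e, (if c.memE e then x e else 0) = ∑ i, x (c.2.edg i) :=
  (Fintype.sum_of_injective c.2.edg c.2.edg_inj (fun i => x (c.2.edg i))
    (fun e => if c.memE e then x e else 0) (fun _ he => if_neg he)
    fun i => (if_pos ⟨i, rfl⟩).symm).symm

variable (C : Set (GraphCycle s t))

lemma cycleMapQ_eq_sum_edg (x : E → ℚ) (c : C) [NeZero c.1.1] :
    cycleMapQ s t C x c = ∑ i, x (c.1.2.edg i) :=
  c.1.sum_ite_memE x

noncomputable def cycleMapQLinear : (E → ℚ) →ₗ[ℚ] C → ℚ where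
  toFun := cycleMapQ s t C
  map_add' x y := by
    ext c
    have := (c : GraphCycle s t).2.neZero
    simp only [cycleMapQ_eq_sum_edg, Pi.add_apply, Finset.sum_add_distrib]
  map_smul' a x := by
    ext c
    have := (c : GraphCycle s t).2.neZero
    simp only [cycleMapQ_eq_sum_edg, Pi.smul_apply, smul_eq_mul, Finset.mul_sum, RingHom.id_apply]

lemma cycleMapQ_add (x y : E → ℚ) :
    cycleMapQ s t C (x + y) = cycleMapQ s t C x + cycleMapQ s t C y :=
  map_add (cycleMapQLinear C) x y

lemma cycleMapQ_sub (x y : E → ℚ) :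
    cycleMapQ s t C (x - y) = cycleMapQ s t C x - cycleMapQ s t C y :=
  map_sub (cycleMapQLinear C) x y

lemma cycleMapQ_smul (a : ℚ) (x : E → ℚ) : cycleMapQ s t C (a • x) = a • cycleMapQ s t C x :=
  map_smul (cycleMapQLinear C) a x

lemma cycleMapQ_edgeInd (e : E) (c : C) :
    cycleMapQ s t C (edgeInd e) c = if c.1.memE e then 1 else 0 := by
  rw [cycleMapQ, Finset.sum_eq_single e (fun e' _ he' => by simp [edgeInd, he']) (by simp)]
  simp [edgeInd]

lemma cycleMapQ_uVtx (w : V) (c : C) [NeZero c.1.1] :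
    cycleMapQ s t C (uVtx s t w) c = #{i | c.1.2.vtx i = w} := by
  rw [cycleMapQ_eq_sum_edg, GCycle.sum_uVtx_edg]

lemma cycleMapQ_mem_intPoints_of_mem_CGsub {x : E → ℚ} (hx : x ∈ CGsub s t) :
    cycleMapQ s t C x ∈ intPoints C := by
  suffices CGsub s t ≤ (intPoints C).comap ((cycleMapQLinear C).restrictScalars ℤ) from this hx
  refine Submodule.span_le.2 (Set.union_subset ?_ ?_)
  · rintro _ ⟨e, rfl⟩ c
    exact ⟨if c.1.memE e then 1 else 0, by simp [cycleMapQLinear, cycleMapQ_edgeInd]⟩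
  · rintro _ ⟨w, rfl⟩ c
    have := c.1.2.neZero
    exact ⟨#{i | c.1.2.vtx i = w}, by simp [cycleMapQLinear, cycleMapQ_uVtx]⟩

lemma cycleMapQ_uVtx_sub_edgeInd {v : V} {e f g : E} (hef : e ≠ f) (heg : e ≠ g) (hfg : f ≠ g)
    (hle : s e ≠ t e) (hlf : s f ≠ t f) (hlg : s g ≠ t g)
    (hinc : ∀ e' : E, (s e' = v ∨ t e' = v) ↔ (e' = e ∨ e' = f ∨ e' = g)) (c : C) :
    cycleMapQ s t C (uVtx s t v - edgeInd g) c = if c.1.memE e ∧ c.1.memE f then 1 else 0 := by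
  have := c.1.2.neZero
  have hvisits := cycleMapQ_uVtx C v c
  rw [uVtx_eq_half_smul_of_incident hef heg hfg hle hlf hlg hinc] at hvisits ⊢
  simp only [cycleMapQ_sub, cycleMapQ_smul, cycleMapQ_add, Pi.sub_apply, Pi.smul_apply,
    Pi.add_apply, cycleMapQ_edgeInd, smul_eq_mul] at hvisits ⊢
  exact half_sum_ite_sub_ite hvisits

end

open Classical in
theorem cycleMapQ_uVtx_and_span_general {V E : Type*} [Fintype E] (s t : E → V)
    (v : V) (e f g : E)
    (hef : e ≠ f) (heg : e ≠ g) (hfg : f ≠ g)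
    (hle : s e ≠ t e) (hlf : s f ≠ t f) (hlg : s g ≠ t g)
    (hinc : ∀ e' : E, (s e' = v ∨ t e' = v) ↔ (e' = e ∨ e' = f ∨ e' = g))
    (C : Set (GraphCycle s t)) :
    (cycleMapQ s t C (uVtx s t v - edgeInd g)
        = fun c : C => if (c : GraphCycle s t).memE e ∧ (c : GraphCycle s t).memE f
            then ((1 : ℤ) : ℚ) else ((0 : ℤ) : ℚ)) ∧
    (∀ x ∈ CGsub s t, ∀ c : C, ∃ m : ℤ, cycleMapQ s t C x c = (m : ℚ)) := by
  refine ⟨funext fun c => ?_, fun x hx => cycleMapQ_mem_intPoints_of_mem_CGsub C hx⟩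
  rw [cycleMapQ_uVtx_sub_edgeInd C hef heg hfg hle hlf hlg hinc, Int.cast_one, Int.cast_zero]

open Classical in
/-- Let `G` be a finite 3-regular graph, `v` a vertex with incident edges `e, f, g`
(pairwise distinct non-loops), and `C` a finite set of cycles.  Then
`C*(u_v − g) = Σ_{c ∈ C : e, f ∈ c} c ∈ ℤ^C`, and consequently `C*` maps the
submodule `𝒞_G` of `(½ℤ)^{E(G)}` into `ℤ^C`. -/
theorem cycleMapQ_uVtx_and_span {V E : Type*} [Fintype V] [Fintype E] (s t : E → V)
    (hreg : ∀ w : V,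
      Nat.card {e : E // s e = w} + Nat.card {e : E // t e = w} = 3)
    (v : V) (e f g : E)
    (hef : e ≠ f) (heg : e ≠ g) (hfg : f ≠ g)
    (hle : s e ≠ t e) (hlf : s f ≠ t f) (hlg : s g ≠ t g)
    (hinc : ∀ e' : E, (s e' = v ∨ t e' = v) ↔ (e' = e ∨ e' = f ∨ e' = g))
    (C : Set (GraphCycle s t)) (hC : C.Finite) :
    (cycleMapQ s t C (uVtx s t v - edgeInd g)
        = fun c : C => if (c : GraphCycle s t).memE e ∧ (c : GraphCycle s t).memE f
            then ((1 : ℤ) : ℚ) else ((0 : ℤ) : ℚ)) ∧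
    (∀ x ∈ CGsub s t, ∀ c : C, ∃ m : ℤ, cycleMapQ s t C x c = (m : ℚ)) :=
  cycleMapQ_uVtx_and_span_general s t v e f g hef heg hfg hle hlf hlg hinc C
end

section
/- Let G be a finite 3-regular graph with oriented edges, C the set of all cycles of G, and φ : Z̃(G) → ℤ^C the ℤ-linear map defined on basis elements by φ(E^{e,f}) = Σ_{c ∋ e,f} ε_c^{e,f} c. Then for every vertex v and every edge e not incident to v, φ(Ṽ^{v,e}) = 0, where Ṽ^{v,e} = Σ_{f incident to v} δ^{v,f} E^{e,f}. -/
open Classical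

/-- The set of all cycles of the graph, as subgraphs: a cycle subgraph is a pair
(vertex set, edge set) arising from some cycle. -/
abbrev CycleSub {V E : Type*} (s t : E → V) : Type _ :=
  {p : Set V × Set E // ∃ (k : ℕ) (c : GCycle s t k),
      Set.range c.vtx = p.1 ∧ Set.range c.edg = p.2}

/-- `ε_c^{e,f} ∈ {±1}` for a cycle subgraph `c` containing the edges `e, f`:
it is `+1` iff `e` and `f` have matching orientation along `c`, i.e. iff for some
(equivalently, any) parametrization of `c` the edges `e` and `f` match the same
traversal direction. -/
noncomputable def epsSub {V E : Type*} (s t : E → V) (p : CycleSub s t) (e f : E) : ℤ :=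
  if ∃ (k : ℕ) (c : GCycle s t k) (i j : ZMod k),
      Set.range c.vtx = p.1.1 ∧ Set.range c.edg = p.1.2 ∧
      c.edg i = e ∧ c.edg j = f ∧ ((s e = c.vtx i) ↔ (s f = c.vtx j))
    then 1 else -1

/-- The value of `φ` on the generator `E^{e,f}` of `Z̃(G)`: the vector in `ℤ^C`
(`C` = all cycles of `G`) whose `c`-coordinate is `ε_c^{e,f}` if `c` contains both
`e` and `f`, and `0` otherwise. -/
noncomputable def phiGen {V E : Type*} (s t : E → V) (e f : E) : CycleSub s t → ℤ :=
  fun p => if e ∈ p.1.2 ∧ f ∈ p.1.2 then epsSub s t p e f else 0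

/-!
Fix a parametrization of a cycle and call its `i`-th edge forward if it starts at the `i`-th
vertex. Then `ε^{e,f}` is the product of the forward signs of `e` and `f`; this is independent of
the parametrization because, for two consecutive edges `a, b` meeting at `w`, "`a` and `b` are
both forward or both backward" holds iff exactly one of them starts at `w`, a condition not
referring to the parametrization. If the cycle passes through `v` at position `i`, the only edges
of it incident to `v` are the edges `i - 1` and `i`, and their incidence signs at `v` are minus
and plus their forward signs, so their contributions to `φ(Ṽ^{v,e})` cancel.
-/

noncomputable def signOf (P : Prop) : ℤ := if P then 1 else -1

theorem signOf_not (P : Prop) : signOf (¬P) = -signOf P := by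
  by_cases h : P <;> simp [signOf, h]

theorem signOf_iff (P Q : Prop) : signOf (P ↔ Q) = signOf P * signOf Q := by
  by_cases hP : P <;> by_cases hQ : Q <;> simp [signOf, hP, hQ]

theorem signOf_mul_self (P : Prop) : signOf P * signOf P = 1 := by
  by_cases h : P <;> simp [signOf, h]

section Incidence

variable {V E : Type*}

/-- The coefficient `δ^{v,f}`. -/
noncomputable def incidence (s t : E → V) (v : V) (f : E) : ℤ :=
  (if s f = v then 1 else 0) - (if t f = v then 1 else 0)

theorem incidence_eq_zero {s t : E → V} {v : V} {f : E} (hs : s f ≠ v) (ht : t f ≠ v) :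
    incidence s t v f = 0 := by
  simp [incidence, hs, ht]

theorem incidence_eq_signOf {s t : E → V} {v : V} {f : E} (hst : s f ≠ t f)
    (hv : v ∈ ({s f, t f} : Set V)) : incidence s t v f = signOf (s f = v) := by
  rcases hv with rfl | rfl
  · simp [incidence, signOf, Ne.symm hst]
  · simp [incidence, signOf, hst]

end Incidence

theorem iff_iff_iff_transpose {a b c d : Prop} (h : (a ↔ b) ↔ (c ↔ d)) :
    (a ↔ c) ↔ (b ↔ d) := by
  tauto

theorem ZMod.iff_of_forall_iff_add_one {k : ℕ} {D : ZMod k → Prop}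
    (h : ∀ i, D i ↔ D (i + 1)) (i j : ZMod k) : D i ↔ D j := by
  have shift : ∀ n : ℤ, D i ↔ D (i + n) := by
    intro n
    induction n using Int.induction_on with
    | zero => simp
    | succ n ih => exact ih.trans (by rw [Int.cast_add, Int.cast_one, ← add_assoc]; exact h _)
    | pred n ih =>
      have := h (i + ((-n - 1 : ℤ) : ZMod k))
      rw [add_assoc, ← Int.cast_one (R := ZMod k), ← Int.cast_add, sub_add_cancel] at this
      exact ih.trans this.symm
  obtain ⟨n, hn⟩ := ZMod.intCast_surjective (j - i)
  simpa [hn] using shift n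

namespace GCycle

variable {V E : Type*} {s t : E → V} {k : ℕ} (c : GCycle s t k)

def Forward (i : ZMod k) : Prop := s (c.edg i) = c.vtx i

theorem vtx_mem_ends (i : ZMod k) : c.vtx i ∈ ({s (c.edg i), t (c.edg i)} : Set V) := by
  rw [c.ends i]; exact Set.mem_insert _ _

theorem vtx_add_one_mem_ends (i : ZMod k) :
    c.vtx (i + 1) ∈ ({s (c.edg i), t (c.edg i)} : Set V) := by
  rw [c.ends i]; exact Set.mem_insert_of_mem _ rfl

theorem mem_range_vtx_of_mem_ends {x : V} (j : ZMod k)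
    (hx : x ∈ ({s (c.edg j), t (c.edg j)} : Set V)) : x ∈ Set.range c.vtx := by
  rw [c.ends j] at hx
  rcases hx with rfl | rfl
  exacts [⟨j, rfl⟩, ⟨j + 1, rfl⟩]

theorem eq_or_add_one_eq_of_vtx_mem_ends {i j : ZMod k}
    (h : c.vtx i ∈ ({s (c.edg j), t (c.edg j)} : Set V)) : j = i ∨ j + 1 = i := by
  rw [c.ends j] at h
  rcases h with h | h
  exacts [Or.inl (c.vtx_inj h).symm, Or.inr (c.vtx_inj h).symm]

variable {c}

theorem src_ne_tgt (h1 : (1 : ZMod k) ≠ 0) (i : ZMod k) : s (c.edg i) ≠ t (c.edg i) := by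
  intro h
  have hi := c.vtx_mem_ends i
  have hi1 := c.vtx_add_one_mem_ends i
  rw [h, Set.pair_eq_singleton] at hi hi1
  exact h1 (add_eq_left.mp (c.vtx_inj (hi1.trans hi.symm)))

theorem forward_iff_src_ne (h1 : (1 : ZMod k) ≠ 0) (i : ZMod k) :
    c.Forward i ↔ s (c.edg i) ≠ c.vtx (i + 1) := by
  have hne : c.vtx i ≠ c.vtx (i + 1) := fun h => h1 (add_eq_left.mp (c.vtx_inj h).symm)
  have hs : s (c.edg i) ∈ ({c.vtx i, c.vtx (i + 1)} : Set V) := c.ends i ▸ Set.mem_insert _ _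
  rcases hs with hs | (hs : s (c.edg i) = c.vtx (i + 1))
  · simp only [Forward, hs, true_iff]; exact hne
  · simp only [Forward, hs, ne_eq, not_true_eq_false, iff_false]; exact hne.symm

theorem forward_iff_forward_iff_of_vtx_mem_ends {i ja jb : ZMod k} (hab : ja ≠ jb)
    (ha : c.vtx i ∈ ({s (c.edg ja), t (c.edg ja)} : Set V))
    (hb : c.vtx i ∈ ({s (c.edg jb), t (c.edg jb)} : Set V)) :
    (c.Forward ja ↔ c.Forward jb) ↔ ¬(s (c.edg ja) = c.vtx i ↔ s (c.edg jb) = c.vtx i) := by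
  have h1 : (1 : ZMod k) ≠ 0 := fun h => hab (eq_of_zero_eq_one h.symm ja jb)
  rcases c.eq_or_add_one_eq_of_vtx_mem_ends ha with rfl | rfl <;>
    rcases c.eq_or_add_one_eq_of_vtx_mem_ends hb with rfl | h
  · exact absurd rfl hab
  · rw [forward_iff_src_ne h1 jb, h]; tauto
  · rw [forward_iff_src_ne h1 ja]; unfold Forward; tauto
  · exact absurd (add_right_cancel h.symm) hab

theorem forward_iff_forward_iff_of_range_eq {k' : ℕ} (c' : GCycle s t k')
    (hV : Set.range c.vtx = Set.range c'.vtx) (hE : Set.range c.edg = Set.range c'.edg)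
    {i j : ZMod k} {i' j' : ZMod k'} (hi : c.edg i = c'.edg i') (hj : c.edg j = c'.edg j') :
    (c.Forward i ↔ c.Forward j) ↔ (c'.Forward i' ↔ c'.Forward j') := by
  choose θ hθ using fun l => hE ▸ Set.mem_range_self (f := c.edg) l
  have hθinj : Function.Injective θ := fun l m hlm => c.edg_inj (by rw [← hθ, ← hθ, hlm])
  have step : ∀ l, (c.Forward l ↔ c'.Forward (θ l)) ↔
      (c.Forward (l + 1) ↔ c'.Forward (θ (l + 1))) := by
    intro l
    by_cases h1 : (1 : ZMod k) = 0
    · rw [h1, add_zero]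
    have hl : l ≠ l + 1 := fun h => h1 (add_eq_left.mp h.symm)
    obtain ⟨z, hz⟩ : c.vtx (l + 1) ∈ Set.range c'.vtx := hV ▸ Set.mem_range_self _
    have hc := forward_iff_forward_iff_of_vtx_mem_ends hl
      (c.vtx_add_one_mem_ends l) (c.vtx_mem_ends (l + 1))
    have hc' := forward_iff_forward_iff_of_vtx_mem_ends (c := c') (i := z) (hθinj.ne hl)
      (by rw [hθ, hz]; exact c.vtx_add_one_mem_ends l) (by rw [hθ, hz]; exact c.vtx_mem_ends _)
    rw [hθ, hθ, hz] at hc'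
    exact iff_iff_iff_transpose (hc.trans hc'.symm)
  have hi' : i' = θ i := c'.edg_inj (by rw [hθ, hi])
  have hj' : j' = θ j := c'.edg_inj (by rw [hθ, hj])
  subst hi' hj'
  exact iff_iff_iff_transpose (ZMod.iff_of_forall_iff_add_one step i j)

theorem incidence_vtx_edg (h1 : (1 : ZMod k) ≠ 0) (i : ZMod k) :
    incidence s t (c.vtx i) (c.edg i) = signOf (c.Forward i) :=
  incidence_eq_signOf (src_ne_tgt h1 i) (c.vtx_mem_ends i)

theorem incidence_vtx_add_one_edg (h1 : (1 : ZMod k) ≠ 0) (i : ZMod k) :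
    incidence s t (c.vtx (i + 1)) (c.edg i) = -signOf (c.Forward i) := by
  rw [incidence_eq_signOf (src_ne_tgt h1 i) (c.vtx_add_one_mem_ends i), ← signOf_not,
    forward_iff_src_ne h1, not_not]

theorem sum_incidence_mul_eq_zero [Fintype E] {g : E → ℤ}
    (hg : ∀ f ∉ Set.range c.edg, g f = 0) {v : V} (hv : v ∉ Set.range c.vtx) :
    ∑ f, incidence s t v f * g f = 0 := by
  refine Finset.sum_eq_zero fun f _ => ?_
  by_cases hf : f ∈ Set.range c.edg
  · obtain ⟨j, rfl⟩ := hf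
    have hs := c.mem_range_vtx_of_mem_ends j (Set.mem_insert _ _)
    have ht := c.mem_range_vtx_of_mem_ends j (Set.mem_insert_of_mem _ rfl)
    rw [incidence_eq_zero (by rintro rfl; exact hv hs) (by rintro rfl; exact hv ht), zero_mul]
  · rw [hg f hf, mul_zero]

theorem sum_incidence_vtx_mul [Fintype E] {g : E → ℤ}
    (hg : ∀ f ∉ Set.range c.edg, g f = 0) (h1 : (1 : ZMod k) ≠ 0) (i : ZMod k) :
    ∑ f, incidence s t (c.vtx i) f * g f =
      signOf (c.Forward i) * g (c.edg i) - signOf (c.Forward (i - 1)) * g (c.edg (i - 1)) := by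
  have hne : c.edg i ≠ c.edg (i - 1) :=
    c.edg_inj.ne fun h => h1 (by simpa using (congrArg (i - ·) h).symm)
  rw [← Finset.sum_subset (Finset.subset_univ {c.edg i, c.edg (i - 1)}), Finset.sum_pair hne,
    incidence_vtx_edg h1]
  · have hpred := incidence_vtx_add_one_edg (c := c) h1 (i - 1)
    rw [sub_add_cancel] at hpred
    rw [hpred]
    ring
  intro f _ hf
  simp only [Finset.mem_insert, Finset.mem_singleton, not_or] at hf
  by_cases hfc : f ∈ Set.range c.edg
  · obtain ⟨j, rfl⟩ := hfc
    have hvf : c.vtx i ∉ ({s (c.edg j), t (c.edg j)} : Set V) := by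
      intro hvf
      rcases c.eq_or_add_one_eq_of_vtx_mem_ends hvf with rfl | rfl
      · exact hf.1 rfl
      · exact hf.2 (by rw [add_sub_cancel_right])
    have hs : s (c.edg j) ≠ c.vtx i := fun h => hvf (h ▸ Set.mem_insert _ _)
    have ht : t (c.edg j) ≠ c.vtx i := fun h => hvf (h ▸ Set.mem_insert_of_mem _ rfl)
    rw [incidence_eq_zero hs ht, zero_mul]
  · rw [hg f hfc, mul_zero]

end GCycle

section Phi

variable {V E : Type*} {s t : E → V}

theorem epsSub_edg_edg (p : CycleSub s t) {k : ℕ} (c : GCycle s t k)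
    (hcv : Set.range c.vtx = p.1.1) (hce : Set.range c.edg = p.1.2) (i j : ZMod k) :
    epsSub s t p (c.edg i) (c.edg j) = signOf (c.Forward i ↔ c.Forward j) := by
  refine congrArg signOf (propext ⟨?_, fun h => ⟨k, c, i, j, hcv, hce, rfl, rfl, h⟩⟩)
  rintro ⟨k', c', i', j', hcv', hce', hi', hj', h⟩
  rw [← hi', ← hj'] at h
  exact (c.forward_iff_forward_iff_of_range_eq c' (hcv.trans hcv'.symm)
    (hce.trans hce'.symm) hi'.symm hj'.symm).mpr h

theorem phiGen_edg_edg (p : CycleSub s t) {k : ℕ} (c : GCycle s t k)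
    (hcv : Set.range c.vtx = p.1.1) (hce : Set.range c.edg = p.1.2) (i j : ZMod k) :
    phiGen s t (c.edg i) (c.edg j) p = signOf (c.Forward i ↔ c.Forward j) := by
  rw [phiGen, if_pos ⟨hce ▸ Set.mem_range_self i, hce ▸ Set.mem_range_self j⟩,
    epsSub_edg_edg p c hcv hce]

theorem phiGen_apply_eq_zero_of_left_not_mem {p : CycleSub s t} {e : E} (he : e ∉ p.1.2)
    (f : E) : phiGen s t e f p = 0 :=
  if_neg fun h => he h.1

theorem phiGen_apply_eq_zero_of_right_not_mem {p : CycleSub s t} (e : E) {f : E}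
    (hf : f ∉ p.1.2) : phiGen s t e f p = 0 :=
  if_neg fun h => hf h.2

end Phi

theorem phi_vanishes_on_Vtilde_general {V E : Type*} [Fintype E] (s t : E → V)
    (v : V) (e : E) (hse : s e ≠ v) (hte : t e ≠ v) :
    (∑ f : E, ((if s f = v then (1 : ℤ) else 0) - (if t f = v then (1 : ℤ) else 0)) •
        phiGen s t e f) = 0 := by
  funext p
  obtain ⟨k, c, hcv, hce⟩ := p.2
  have hg : ∀ f ∉ Set.range c.edg, phiGen s t e f p = 0 := fun f hf =>
    phiGen_apply_eq_zero_of_right_not_mem e (hce ▸ hf)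
  simp only [Finset.sum_apply, Pi.smul_apply, smul_eq_mul, Pi.zero_apply]
  change ∑ f, incidence s t v f * phiGen s t e f p = 0
  by_cases hv : v ∈ Set.range c.vtx
  swap
  · exact c.sum_incidence_mul_eq_zero hg hv
  obtain ⟨i, rfl⟩ := hv
  by_cases he : e ∈ Set.range c.edg
  swap
  · simp [phiGen_apply_eq_zero_of_left_not_mem (hce ▸ he)]
  obtain ⟨ie, rfl⟩ := he
  have h1 : (1 : ZMod k) ≠ 0 := by
    intro h
    obtain rfl : ie = i := eq_of_zero_eq_one h.symm ie i
    rcases c.vtx_mem_ends ie with h | h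
    exacts [hse h.symm, hte h.symm]
  rw [c.sum_incidence_vtx_mul hg h1, phiGen_edg_edg p c hcv hce, phiGen_edg_edg p c hcv hce,
    signOf_iff, signOf_iff]
  linear_combination signOf (c.Forward ie) *
    (signOf_mul_self (c.Forward i) - signOf_mul_self (c.Forward (i - 1)))

/-- Let `G` be a finite 3-regular graph with oriented edges and `C` the set of all
cycles of `G`.  For every vertex `v` and edge `e` not incident to `v`, the linear
map `φ : Z̃(G) → ℤ^C` with `φ(E^{e,f}) = Σ_{c ∋ e,f} ε_c^{e,f} c` kills
`Ṽ^{v,e} = Σ_{f incident to v} δ^{v,f} E^{e,f}` (a loop at `v` contributes both of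
its half-edges, with opposite signs). -/
theorem phi_vanishes_on_Vtilde {V E : Type*} [Fintype V] [Fintype E] (s t : E → V)
    (hreg : ∀ w : V,
      Nat.card {e : E // s e = w} + Nat.card {e : E // t e = w} = 3)
    (v : V) (e : E) (hse : s e ≠ v) (hte : t e ≠ v) :
    (∑ f : E, ((if s f = v then (1 : ℤ) else 0) - (if t f = v then (1 : ℤ) else 0)) •
        phiGen s t e f) = 0 :=
  phi_vanishes_on_Vtilde_general s t v e hse hte
end

section
/- Let n ≥ 3 and let A be the (3n+1) × 3n integer matrix of the linear system from the Möbius ladder M_n: rows indexed by the n cycles in C_4, the 2n cycles in C_+, and γ; columns indexed by the 2n rim edges e_k and n rungs r_l; entry 1 if the edge lies in the cycle, else 0. Then for d ≠ 0, the vector b ∈ ℤ^{3n+1} with entry −d at the C_4-row of the cycle containing e_0 and e_n, entry d at the γ-row, and 0 elsewhere, does not lie in the image of A over ℚ (hence not over ℤ). -/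
open Classical in
/-- The rational incidence system of the Möbius ladder: `A` acting on `ℚ^{E(M n)}`,
rows indexed by the cycles of `C = C₄ ∪ C₊ ∪ {γ}`, entry `1` if the edge lies in
the cycle and `0` otherwise. -/
noncomputable def mobiusCycleMapQ (n : ℕ) [NeZero n] [NeZero (2 * n)]
    (x : MobiusEdge n → ℚ) : MobiusCyc n → ℚ :=
  fun i => ∑ e : MobiusEdge n, if memMobiusCyc n i e then x e else 0

open Finset Matrix

theorem not_exists_mulVec_eq_of_vecMul_eq_zero {R m n : Type*} [CommSemiring R] [Fintype m]
    [Fintype n] {M : Matrix m n R} {b c : m → R} (hc : c ᵥ* M = 0) (hb : c ⬝ᵥ b ≠ 0) :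
    ¬ ∃ x, M *ᵥ x = b := by
  rintro ⟨x, rfl⟩
  rw [dotProduct_mulVec, hc, zero_dotProduct] at hb
  exact hb rfl

namespace ZMod

variable {n : ℕ} [NeZero n]

theorem natCast_val_eq_iff_two_mul (k : ZMod (2 * n)) (l : ZMod n) :
    (k.val : ZMod n) = l ↔ k = l.val ∨ k = l.val + n := by
  have hl := l.val_lt
  have hk := k.val_lt
  constructor
  · rintro rfl
    rw [val_natCast]
    rcases lt_or_ge k.val n with h | h
    · left
      rw [Nat.mod_eq_of_lt h, natCast_zmod_val]
    · right
      rw [Nat.mod_eq_sub_mod h, Nat.mod_eq_of_lt (by omega), ← Nat.cast_add, Nat.sub_add_cancel h,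
        natCast_zmod_val]
  · rintro (rfl | rfl)
    · rw [val_natCast_of_lt (by omega), natCast_zmod_val]
    · rw [← Nat.cast_add, val_natCast_of_lt (by omega)]
      simp

theorem card_filter_natCast_val_eq_two_mul (l : ZMod n) :
    #{k : ZMod (2 * n) | (k.val : ZMod n) = l} = 2 := by
  have hn : (n : ZMod (2 * n)) ≠ 0 := by
    intro h
    have := val_natCast_of_lt (show n < 2 * n by have := NeZero.pos n; omega)
    rw [h, val_zero] at this
    exact NeZero.ne n this.symm
  have hne : ((l.val : ℕ) : ZMod (2 * n)) ≠ l.val + n := fun h => hn (by linear_combination -h)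
  simp_rw [natCast_val_eq_iff_two_mul, filter_or, filter_eq', if_pos (mem_univ _)]
  rw [card_union_of_disjoint (by simpa using hne), card_singleton, card_singleton]

end ZMod

section MobiusLadder

open Classical

variable (n : ℕ)

theorem memCplus_inr_iff (k : ZMod (2 * n)) (l : ZMod n) :
    memCplus n k (Sum.inr l) ↔ (k.val : ZMod n) = l :=
  eq_comm

variable [NeZero n]

theorem memC4_inl_iff (l : ZMod n) (k : ZMod (2 * n)) :
    memC4 n l (Sum.inl k) ↔ (k.val : ZMod n) = l :=
  (ZMod.natCast_val_eq_iff_two_mul k l).symm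

theorem card_filter_memC4_inl (k : ZMod (2 * n)) :
    #{l : ZMod n | memC4 n l (Sum.inl k)} = 1 := by
  simp_rw [memC4_inl_iff, filter_eq, mem_univ, if_true, card_singleton]

theorem card_filter_memC4_inr (hn : 1 < n) (l : ZMod n) :
    #{l' : ZMod n | memC4 n l' (Sum.inr l)} = 2 := by
  have : Fact (1 < n) := ⟨hn⟩
  have hne : l ≠ l - 1 := fun h => one_ne_zero (by linear_combination h : (1 : ZMod n) = 0)
  convert card_pair hne
  ext l'
  rw [mem_filter_univ, mem_insert, mem_singleton, memC4]
  constructor <;> rintro (rfl | rfl) <;> simp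

theorem card_filter_memCplus_inl (k : ZMod (2 * n)) :
    #{m : ZMod (2 * n) | memCplus n m (Sum.inl k)} = n := by
  have hinj : Function.Injective fun j : Fin n => k - ((j : ℕ) : ZMod (2 * n)) := by
    intro i j hij
    have h := congrArg ZMod.val (sub_right_injective hij)
    rw [ZMod.val_natCast_of_lt (by omega), ZMod.val_natCast_of_lt (by omega)] at h
    exact Fin.ext h
  convert (card_image_of_injective univ hinj).trans (card_fin n)
  ext m
  rw [mem_filter_univ, mem_image]
  simp only [memCplus, mem_univ, true_and]
  exact exists_congr fun j =>
    ⟨fun h => by rw [h, add_sub_cancel_right], fun h => by rw [← h, sub_add_cancel]⟩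

theorem card_filter_memCplus_inr (l : ZMod n) :
    #{k : ZMod (2 * n) | memCplus n k (Sum.inr l)} = 2 := by
  simp_rw [memCplus_inr_iff, ZMod.card_filter_natCast_val_eq_two_mul]

noncomputable def mobiusIncidence : Matrix (MobiusCyc n) (MobiusEdge n) ℚ :=
  Matrix.of fun i e => if memMobiusCyc n i e then 1 else 0

noncomputable def mobiusCert : MobiusCyc n → ℚ
  | Sum.inl _ => 1
  | Sum.inr (Sum.inl _) => -1
  | Sum.inr (Sum.inr _) => n - 1

theorem mobiusCert_vecMul_incidence_apply (e : MobiusEdge n) :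
    (mobiusCert n ᵥ* mobiusIncidence n) e =
      #{l | memC4 n l e} - #{k | memCplus n k e} + if memGamma n e then (n - 1 : ℚ) else 0 := by
  simp only [vecMul, dotProduct, Fintype.sum_sum_type, Fintype.sum_unique, mobiusIncidence,
    of_apply, mobiusCert]
  simp only [one_mul, neg_one_mul, sum_neg_distrib]
  simp only [sum_boole, mul_boole]
  rw [← add_assoc, ← sub_eq_add_neg]
  rfl

theorem mobiusCert_vecMul_incidence (hn : 1 < n) : mobiusCert n ᵥ* mobiusIncidence n = 0 := by
  ext (k | l) <;> rw [mobiusCert_vecMul_incidence_apply]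
  · simp [card_filter_memC4_inl, card_filter_memCplus_inl, memGamma]
  · simp [card_filter_memC4_inr n hn, card_filter_memCplus_inr, memGamma]

theorem mobiusCycleMapQ_eq_mulVec [NeZero (2 * n)] (x : MobiusEdge n → ℚ) :
    mobiusCycleMapQ n x = mobiusIncidence n *ᵥ x := by
  ext i
  simp [mobiusCycleMapQ, mobiusIncidence, mulVec, dotProduct]

end MobiusLadder

/-- For `n ≥ 3` and `d ≠ 0`, the vector with entry `−d` at the `C₄`-row of the
4-cycle containing `e_0` and `e_n` (the 4-cycle indexed by `l = 0`), entry `d` at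
the `γ`-row, and `0` elsewhere is not in the image of the incidence matrix over `ℚ`
(hence not over `ℤ`). -/
theorem mobius_vector_not_in_rational_image (n : ℕ) [NeZero n] [NeZero (2 * n)]
    (hn : 3 ≤ n) (d : ℚ) (hd : d ≠ 0) :
    ¬ ∃ x : MobiusEdge n → ℚ,
        mobiusCycleMapQ n x = fun i => match i with
          | Sum.inl l => if l = 0 then -d else 0
          | Sum.inr (Sum.inl _) => 0
          | Sum.inr (Sum.inr _) => d := by
  simp_rw [mobiusCycleMapQ_eq_mulVec]
  refine not_exists_mulVec_eq_of_vecMul_eq_zero (mobiusCert_vecMul_incidence n (by omega)) ?_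
  have hn' : (n : ℚ) - 2 ≠ 0 := by
    have : (3 : ℚ) ≤ n := by exact_mod_cast hn
    linarith
  calc mobiusCert n ⬝ᵥ _ = (n - 2) * d := by
        simp [dotProduct, Fintype.sum_sum_type, mobiusCert]
        ring
    _ ≠ 0 := mul_ne_zero hn' hd
end
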